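/- arXiv:2008.09406 — 5 statements merged into one kernel-verified Lean document; each statement's English description precedes it below -/
import Mathlib

section
/- Let $\sigma$ with vertices $v_1, \ldots, v_\ell$ be a $\delta$-signature of a time series $\pi$, and let $r_i = [v_i - \delta, v_i + \delta]$ for $1 \le i \le \ell$. Then for any time series $\tau$ with $d_F(\pi, \tau) \le \delta$, there exist vertices $w_1, \ldots, w_\ell$ of $\tau$, appearing on $\tau$ in this order, such that $w_i \in r_i$ for all $i$. -/
open Set

/-- Continuous Fréchet distance between two curves parametrized on `[0,1]`. -/
noncomputable def frechetDist {E : Type*} [PseudoMetricSpace E] (f g : ℝ → E) : ℝ :=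
  sInf { r : ℝ | ∃ φ ψ : ℝ → ℝ,
    ContinuousOn φ (Set.Icc 0 1) ∧ ContinuousOn ψ (Set.Icc 0 1) ∧
    MonotoneOn φ (Set.Icc 0 1) ∧ MonotoneOn ψ (Set.Icc 0 1) ∧
    φ 0 = 0 ∧ φ 1 = 1 ∧ ψ 0 = 0 ∧ ψ 1 = 1 ∧
    ∀ t ∈ Set.Icc (0:ℝ) 1, dist (f (φ t)) (g (ψ t)) ≤ r }

/-- The directed line segment from `a` to `b` as a curve on `[0,1]`. -/
def seg {E : Type*} [AddCommGroup E] [Module ℝ E] (a b : E) : ℝ → E :=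
  fun s => (1 - s) • a + s • b

/-- Polygonal curve with vertices `p 0, …, p n`, parametrized on `[0,1]`. -/
noncomputable def polyline {E : Type*} [AddCommGroup E] [Module ℝ E] {n : ℕ}
    (p : Fin (n + 1) → E) (s : ℝ) : E :=
  let u : ℝ := s * n
  let i : ℕ := min ⌊u⌋₊ (n - 1)
  (1 - (u - i)) • p ⟨min i n, Nat.lt_succ_of_le (Nat.min_le_right _ _)⟩
    + (u - i) • p ⟨min (i + 1) n, Nat.lt_succ_of_le (Nat.min_le_right _ _)⟩

/-- Polygonal curve through the points of a list. -/
noncomputable def polylineL {E : Type*} [AddCommGroup E] [Module ℝ E] (l : List E) : ℝ → E :=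
  polyline (n := l.length - 1) (fun i => l.getD i.val 0)

/-- `τ` restricted to `[0,1]` is the polygonal curve with vertices
`τ (t 0), …, τ (t m)` at parameters `0 = t 0 < ⋯ < t m = 1`. -/
def IsPolylineOn (τ : ℝ → ℝ) (m : ℕ) (t : ℕ → ℝ) : Prop :=
  t 0 = 0 ∧ t m = 1 ∧ (∀ i < m, t i < t (i + 1)) ∧
  ∀ i < m, ∀ s, t i ≤ s → s ≤ t (i + 1) →
    τ s = τ (t i) + (s - t i) / (t (i + 1) - t i) * (τ (t (i + 1)) - τ (t i))

/-- `s` is the parameter of a vertex (local extremum) of the time series `τ`. -/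
def VertexAt (τ : ℝ → ℝ) (s : ℝ) : Prop :=
  s ∈ Set.Icc (0:ℝ) 1 ∧
    (IsLocalMaxOn τ (Set.Icc 0 1) s ∨ IsLocalMinOn τ (Set.Icc 0 1) s)

/-- A `δ`-signature of `τ : [0,1] → ℝ`, given by parameters
`0 = t 0 < t 1 < ⋯ < t ℓ = 1` (so the signature has `ℓ + 1` vertices and `ℓ ≥ 1` edges);
the signature curve itself is `polyline (fun i => τ (t i))`. -/
structure IsDeltaSignature (δ : ℝ) (τ : ℝ → ℝ) (ℓ : ℕ) (t : ℕ → ℝ) : Prop where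
  one_le : 1 ≤ ℓ
  mono : ∀ i < ℓ, t i < t (i + 1)
  start : t 0 = 0
  finish : t ℓ = 1
  nondeg : ∀ i, 1 ≤ i → i < ℓ →
    τ (t i) ∉ Set.uIcc (τ (t (i - 1))) (τ (t (i + 1)))
  dir_up : ∀ i < ℓ, τ (t i) < τ (t (i + 1)) →
    ∀ a b, t i ≤ a → a ≤ b → b ≤ t (i + 1) → τ a - τ b ≤ 2 * δ
  dir_down : ∀ i < ℓ, τ (t (i + 1)) < τ (t i) →
    ∀ a b, t i ≤ a → a ≤ b → b ≤ t (i + 1) → τ b - τ a ≤ 2 * δ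
  minedge_int : ∀ i, 1 ≤ i → i ≤ ℓ - 2 → 2 * δ < |τ (t (i + 1)) - τ (t i)|
  minedge_bnd : ∀ i < ℓ, (i = 0 ∨ i = ℓ - 1) → δ < |τ (t (i + 1)) - τ (t i)|
  range_int : ∀ i, 1 ≤ i → i ≤ ℓ - 2 → ∀ s, t i ≤ s → s ≤ t (i + 1) →
    τ s ∈ Set.uIcc (τ (t i)) (τ (t (i + 1)))
  range_first : 2 ≤ ℓ → ∀ s, t 0 ≤ s → s ≤ t 1 →
    τ s ∈ Set.uIcc (τ (t 0)) (τ (t 1)) ∪ Set.Icc (τ (t 0) - δ) (τ (t 0) + δ)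
  range_last : 2 ≤ ℓ → ∀ s, t (ℓ - 1) ≤ s → s ≤ t ℓ →
    τ s ∈ Set.uIcc (τ (t (ℓ - 1))) (τ (t ℓ)) ∪ Set.Icc (τ (t ℓ) - δ) (τ (t ℓ) + δ)
  range_single : ℓ = 1 → ∀ s, (0:ℝ) ≤ s → s ≤ 1 →
    τ s ∈ Set.uIcc (τ (t 0)) (τ (t 1)) ∪ Set.Icc (τ (t 0) - δ) (τ (t 0) + δ)
      ∪ Set.Icc (τ (t 1) - δ) (τ (t 1) + δ)

/-- One step of a traversal: each index advances by 0 or 1, at least one advances. -/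
def TravStep (a b : ℕ × ℕ) : Prop :=
  a.1 ≤ b.1 ∧ b.1 ≤ a.1 + 1 ∧ a.2 ≤ b.2 ∧ b.2 ≤ a.2 + 1 ∧ a ≠ b

/-- A traversal of two point sequences of lengths `m` and `k` (0-based indices). -/
def IsTraversal (m k : ℕ) (T : List (ℕ × ℕ)) : Prop :=
  T.head? = some (0, 0) ∧ T.getLast? = some (m - 1, k - 1) ∧ List.Chain' TravStep T

/-- Discrete Fréchet distance between the point sequences
`p 0, …, p (m-1)` and `q 0, …, q (k-1)`. -/
noncomputable def ddF {E : Type*} [PseudoMetricSpace E] (m k : ℕ) (p q : ℕ → E) : ℝ :=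
  sInf { r : ℝ | ∃ T : List (ℕ × ℕ), IsTraversal m k T ∧
    ∀ ij ∈ T, dist (p ij.1) (q ij.2) ≤ r }

/-- The subsequence of local extrema (vertex sequence) of a list of values. -/
def vertexSeq {α : Type*} [LinearOrder α] : List α → List α
  | [] => []
  | [a] => [a]
  | [a, b] => [a, b]
  | a :: b :: c :: rest =>
    if (a ≤ b ∧ b ≤ c) ∨ (c ≤ b ∧ b ≤ a) then vertexSeq (a :: c :: rest)
    else a :: vertexSeq (b :: c :: rest)
termination_by l => l.length

/-!
A compactness argument over `ε`-optimal reparametrisations turns `d_F(π, τ) ≤ δ` into cut points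
`0 = z 0 ≤ z 1 ≤ ⋯ ≤ z ℓ = 1` with `|τ (z i) - π (t i)| ≤ δ`, each piece `τ [z i, z (i+1)]` being
pointwise `δ`-close to `π [t i, t (i+1)]`.

If `π (t i)` is an interior maximum of the signature, the range property bounds `π` by `π (t i)` on
`[t (i-1), t (i+1)]`, so `τ ≤ π (t i) + δ` on `[z (i-1), z (i+1)]` while `τ (z i) ≥ π (t i) - δ`.
Since interior edges are longer than `2δ`, the maximiser of `τ` on this window (started at the
previous vertex, which keeps the vertices ordered) is not at its ends, hence is a vertex of `τ`.
Minima follow by negating `π` and `τ`.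

At the ends, `τ 0` is within `δ` of `π (t 0)`. Either `0` is a vertex of `τ`, or `τ` oscillates near
`0` and has vertices with values arbitrarily close to `τ 0` on the required side; for `δ = 0`, `τ`
stays on one side of `τ 0` along the first piece, so `0` is a vertex. The end `1` is symmetric.
-/

open Filter Topology

lemma monotoneOn_Iic_of_le_succ {α : Type*} [Preorder α] {f : ℕ → α} {n : ℕ}
    (hf : ∀ i < n, f i ≤ f (i + 1)) : MonotoneOn f (Iic n) := by
  have hmin : Monotone fun i => f (min i n) := monotone_nat_of_le_succ fun i => by
    rcases lt_or_ge i n with hi | hi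
    · rw [min_eq_left hi.le, min_eq_left hi]; exact hf i hi
    · rw [min_eq_right hi, min_eq_right (hi.trans (Nat.le_succ i))]
  intro i hi j hj hij
  simpa [min_eq_left (mem_Iic.1 hi), min_eq_left (mem_Iic.1 hj)] using hmin hij

lemma Icc_mem_nhdsWithin_Icc_zero_one {a b p : ℝ} (ha : a < p ∨ a ≤ 0) (hb : p < b ∨ 1 ≤ b) :
    Icc a b ∈ 𝓝[Icc 0 1] p := by
  rw [← Ici_inter_Iic]
  refine inter_mem ?_ ?_
  · rcases ha with ha | ha
    · exact nhdsWithin_le_nhds (Ici_mem_nhds ha)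
    · exact mem_of_superset self_mem_nhdsWithin fun x hx => ha.trans hx.1
  · rcases hb with hb | hb
    · exact nhdsWithin_le_nhds (Iic_mem_nhds hb)
    · exact mem_of_superset self_mem_nhdsWithin fun x hx => hx.2.trans hb

lemma vertexAt_of_isExtrOn {τ : ℝ → ℝ} {a b p : ℝ} (hp : p ∈ Icc (0 : ℝ) 1)
    (h : IsExtrOn τ (Icc a b) p) (ha : a < p ∨ a ≤ 0) (hb : p < b ∨ 1 ≤ b) : VertexAt τ p :=
  ⟨hp, (h.filter_mono (le_principal_iff.2 (Icc_mem_nhdsWithin_Icc_zero_one ha hb))).symm⟩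

lemma VertexAt.neg {τ : ℝ → ℝ} {p : ℝ} (h : VertexAt τ p) : VertexAt (fun s => -τ s) p :=
  ⟨h.1, h.2.symm.imp IsLocalMinOn.neg IsLocalMaxOn.neg⟩

lemma VertexAt.of_neg {τ : ℝ → ℝ} {p : ℝ} (h : VertexAt (fun s => -τ s) p) : VertexAt τ p := by
  simpa using h.neg

lemma VertexAt.comp_one_sub {τ : ℝ → ℝ} {p : ℝ} (h : VertexAt τ (1 - p)) :
    VertexAt (fun s => τ (1 - s)) p := by
  have hp : p ∈ Icc (0 : ℝ) 1 := ⟨by linarith [h.1.2], by linarith [h.1.1]⟩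
  have hmaps : MapsTo (fun s : ℝ => 1 - s) (Icc 0 1) (Icc 0 1) :=
    fun s hs => ⟨by linarith [hs.2], by linarith [hs.1]⟩
  have hlim := ((continuous_const.sub continuous_id).continuousWithinAt
    (s := Icc (0 : ℝ) 1) (x := p)).tendsto_nhdsWithin hmaps
  exact ⟨hp, h.2.imp (fun hm => hm.comp_tendsto hlim) (fun hm => hm.comp_tendsto hlim)⟩

lemma exists_vertexAt_mem_Icc_ge {τ : ℝ → ℝ} (hτ : ContinuousOn τ (Icc 0 1)) {a b c : ℝ}
    (hc : c ∈ Icc a b) (ha₀ : 0 ≤ a) (hb₁ : b ≤ 1) (ha : τ a < τ c ∨ a ≤ 0)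
    (hb : τ b < τ c ∨ 1 ≤ b) : ∃ p ∈ Icc a b, VertexAt τ p ∧ τ c ≤ τ p := by
  have hsub : Icc a b ⊆ Icc 0 1 := Icc_subset_Icc ha₀ hb₁
  obtain ⟨p, hp, hmax⟩ := isCompact_Icc.exists_isMaxOn ⟨c, hc⟩ (hτ.mono hsub)
  have hcp : τ c ≤ τ p := hmax hc
  refine ⟨p, hp, vertexAt_of_isExtrOn (hsub hp) hmax.isExtr ?_ ?_, hcp⟩
  · exact ha.imp_left fun h => hp.1.lt_of_ne (by rintro rfl; linarith)
  · exact hb.imp_left fun h => hp.2.lt_of_ne (by rintro rfl; linarith)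

lemma exists_vertexAt_near_zero_le {τ : ℝ → ℝ} (hτ : ContinuousOn τ (Icc 0 1)) {η ε : ℝ}
    (hη : 0 < η) (hε : 0 < ε) : ∃ p ∈ Icc 0 η, VertexAt τ p ∧ τ p ≤ τ 0 ∧ τ 0 - ε < τ p := by
  by_cases h0 : VertexAt τ 0
  · exact ⟨0, ⟨le_rfl, hη.le⟩, h0, le_rfl, by linarith⟩
  -- otherwise `τ` exceeds `τ 0` at some small `y` and drops below it at some `x < y`
  have hfreq : ∀ {P : ℝ → Prop}, (∃ᶠ x in 𝓝[Icc 0 1] 0, P x) →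
      ∀ r > 0, ∃ x ∈ Icc (0 : ℝ) 1, x < r ∧ P x := fun hP r hr => by
    obtain ⟨x, hPx, hxr, hx⟩ := (hP.and_eventually
      ((show ∀ᶠ x in 𝓝[Icc 0 1] 0, x < r from nhdsWithin_le_nhds (Iio_mem_nhds hr)).and
        self_mem_nhdsWithin)).exists
    exact ⟨x, hx, hxr, hPx⟩
  have h01 : (0 : ℝ) ∈ Icc 0 1 := left_mem_Icc.2 zero_le_one
  obtain ⟨η₀, hη₀, hcont⟩ := Metric.continuousWithinAt_iff.1 (hτ 0 h01) ε hε
  obtain ⟨y, hy, hyη, hτy⟩ := hfreq (Filter.not_eventually.1 fun h => h0 ⟨h01, Or.inl h⟩)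
    (min η η₀) (lt_min hη hη₀)
  obtain ⟨x, hx, hxy, hτx⟩ := hfreq (Filter.not_eventually.1 fun h => h0 ⟨h01, Or.inr h⟩) y
    (hy.1.lt_of_ne (by rintro rfl; exact hτy (le_refl _)))
  rw [not_le] at hτy hτx
  obtain ⟨p, hp, hpv, hpx⟩ := exists_vertexAt_mem_Icc_ge (τ := fun s => -τ s) hτ.neg
    ⟨hx.1, hxy.le⟩ le_rfl hy.2 (Or.inl (neg_lt_neg hτx)) (Or.inl (by linarith))
  have hpε : dist (τ p) (τ 0) < ε := hcont ⟨hp.1, hp.2.trans hy.2⟩ <| by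
    rw [Real.dist_eq, sub_zero, abs_of_nonneg hp.1]
    exact hp.2.trans_lt (hyη.trans_le (min_le_right _ _))
  rw [Real.dist_eq] at hpε
  exact ⟨p, ⟨hp.1, hp.2.trans (hyη.le.trans (min_le_left _ _))⟩, hpv.of_neg,
    by linarith, by linarith [(abs_lt.1 hpε).1]⟩

lemma exists_vertexAt_near_zero {τ : ℝ → ℝ} (hτ : ContinuousOn τ (Icc 0 1)) {δ v η : ℝ}
    (hδ : 0 < δ) (hv : |τ 0 - v| ≤ δ) (hη : 0 < η) :
    ∃ p ∈ Icc 0 η, VertexAt τ p ∧ |τ p - v| ≤ δ := by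
  rcases abs_le.1 hv with ⟨hv₁, hv₂⟩
  rcases le_total v (τ 0) with h | h
  · obtain ⟨p, hp, hpv, hp₁, hp₂⟩ :=
      exists_vertexAt_near_zero_le hτ hη (show 0 < τ 0 - v + δ by linarith)
    exact ⟨p, hp, hpv, abs_le.2 ⟨by linarith, by linarith⟩⟩
  · obtain ⟨p, hp, hpv, hp₁, hp₂⟩ :=
      exists_vertexAt_near_zero_le (τ := fun s => -τ s) hτ.neg hη (show 0 < v - τ 0 + δ by linarith)
    exact ⟨p, hp, hpv.of_neg, abs_le.2 ⟨by linarith, by linarith⟩⟩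

lemma exists_vertexAt_near_one {τ : ℝ → ℝ} (hτ : ContinuousOn τ (Icc 0 1)) {δ v η : ℝ}
    (hδ : 0 < δ) (hv : |τ 1 - v| ≤ δ) (hη : η < 1) :
    ∃ p ∈ Icc η 1, VertexAt τ p ∧ |τ p - v| ≤ δ := by
  have hmaps : MapsTo (fun s : ℝ => 1 - s) (Icc 0 1) (Icc 0 1) :=
    fun s hs => ⟨by linarith [hs.2], by linarith [hs.1]⟩
  obtain ⟨p, hp, hpv, hpd⟩ := exists_vertexAt_near_zero
    (τ := fun s => τ (1 - s)) (hτ.comp (continuousOn_const.sub continuousOn_id) hmaps) hδ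
    (by simpa using hv) (sub_pos.2 hη)
  refine ⟨1 - p, ⟨by linarith [hp.2], by linarith [hp.1]⟩, ?_, hpd⟩
  simpa using (show VertexAt (fun s => τ (1 - s)) (1 - (1 - p)) by simpa using hpv).comp_one_sub

structure IsMonotoneReparam (φ : ℝ → ℝ) : Prop where
  continuousOn : ContinuousOn φ (Icc 0 1)
  monotoneOn : MonotoneOn φ (Icc 0 1)
  map_zero : φ 0 = 0
  map_one : φ 1 = 1

lemma IsMonotoneReparam.mapsTo {φ : ℝ → ℝ} (hφ : IsMonotoneReparam φ) :
    MapsTo φ (Icc 0 1) (Icc 0 1) := fun _ hs =>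
  ⟨hφ.map_zero ▸ hφ.monotoneOn (left_mem_Icc.2 zero_le_one) hs hs.1,
    hφ.map_one ▸ hφ.monotoneOn hs (right_mem_Icc.2 zero_le_one) hs.2⟩

lemma IsMonotoneReparam.surjOn {φ : ℝ → ℝ} (hφ : IsMonotoneReparam φ) :
    SurjOn φ (Icc 0 1) (Icc 0 1) := by
  have h := intermediate_value_Icc zero_le_one hφ.continuousOn
  rwa [hφ.map_zero, hφ.map_one] at h

lemma exists_reparam_of_frechetDist_lt {π τ : ℝ → ℝ} (hπ : ContinuousOn π (Icc 0 1))
    (hτ : ContinuousOn τ (Icc 0 1)) {r : ℝ} (h : frechetDist π τ < r) :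
    ∃ φ ψ, IsMonotoneReparam φ ∧ IsMonotoneReparam ψ ∧
      ∀ s ∈ Icc (0 : ℝ) 1, |π (φ s) - τ (ψ s)| ≤ r := by
  unfold frechetDist at h
  obtain ⟨C, hC⟩ := (isCompact_Icc.image_of_continuousOn
    (continuous_dist.comp_continuousOn (hπ.prodMk hτ))).bddAbove
  obtain ⟨r', ⟨φ, ψ, hφc, hψc, hφm, hψm, hφ0, hφ1, hψ0, hψ1, hr'⟩, hr'r⟩ :=
    exists_lt_of_csInf_lt (by exact ⟨C, id, id, continuousOn_id, continuousOn_id, monotoneOn_id,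
      monotoneOn_id, rfl, rfl, rfl, rfl, fun s hs => hC (mem_image_of_mem _ hs)⟩) h
  refine ⟨φ, ψ, ⟨hφc, hφm, hφ0, hφ1⟩, ⟨hψc, hψm, hψ0, hψ1⟩, fun s hs => ?_⟩
  rw [← Real.dist_eq]
  exact (hr' s hs).trans hr'r.le

/-- The trace of a Fréchet matching at the parameters `t i` of `π`; `mem` is imposed for all `i`
so that matchings form a compact family. -/
structure IsMatching (δ : ℝ) (π τ : ℝ → ℝ) (ℓ : ℕ) (t z : ℕ → ℝ) : Prop where
  mem : ∀ i, z i ∈ Icc (0 : ℝ) 1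
  start : z 0 = 0
  finish : z ℓ = 1
  mono : ∀ i < ℓ, z i ≤ z (i + 1)
  abs_sub_le : ∀ i ≤ ℓ, |τ (z i) - π (t i)| ≤ δ
  exists_abs_sub_le : ∀ i < ℓ, ∀ s ∈ Icc (z i) (z (i + 1)),
    ∃ x ∈ Icc (t i) (t (i + 1)), |τ s - π x| ≤ δ

def IsVertexStabbing (δ : ℝ) (τ : ℝ → ℝ) (v : ℕ → ℝ) (a b : ℕ) (s : ℕ → ℝ) : Prop :=
  (∀ i, a ≤ i → i < b → s i ≤ s (i + 1)) ∧
    ∀ i, a ≤ i → i ≤ b → VertexAt τ (s i) ∧ |τ (s i) - v i| ≤ δ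

section Stabbing

variable {δ : ℝ} {τ : ℝ → ℝ} {v : ℕ → ℝ} {a b : ℕ} {s : ℕ → ℝ} {p : ℝ}

lemma isVertexStabbing_const (hp : VertexAt τ p) (hv : |τ p - v a| ≤ δ) :
    IsVertexStabbing δ τ v a a fun _ => p :=
  ⟨fun _ h₁ h₂ => absurd h₂ (not_lt.2 h₁), fun _ h₁ h₂ => le_antisymm h₂ h₁ ▸ ⟨hp, hv⟩⟩

lemma IsVertexStabbing.snoc (hs : IsVertexStabbing δ τ v a b s) (hsp : s b ≤ p)
    (hp : VertexAt τ p) (hv : |τ p - v (b + 1)| ≤ δ) :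
    IsVertexStabbing δ τ v a (b + 1) (Function.update s (b + 1) p) := by
  refine ⟨fun i h₁ h₂ => ?_, fun i h₁ h₂ => ?_⟩
  · rcases (by omega : i = b ∨ i < b) with rfl | hi
    · rwa [Function.update_self, Function.update_of_ne (by omega)]
    · rw [Function.update_of_ne (by omega), Function.update_of_ne (by omega)]
      exact hs.1 i h₁ hi
  · rcases (by omega : i = b + 1 ∨ i ≤ b) with rfl | hi
    · rw [Function.update_self]; exact ⟨hp, hv⟩
    · rw [Function.update_of_ne (by omega)]; exact hs.2 i h₁ hi

lemma IsVertexStabbing.cons (hs : IsVertexStabbing δ τ v (a + 1) b s) (hps : p ≤ s (a + 1))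
    (hp : VertexAt τ p) (hv : |τ p - v a| ≤ δ) :
    IsVertexStabbing δ τ v a b (Function.update s a p) := by
  refine ⟨fun i h₁ h₂ => ?_, fun i h₁ h₂ => ?_⟩
  · rcases (by omega : i = a ∨ a + 1 ≤ i) with rfl | hi
    · rwa [Function.update_self, Function.update_of_ne (by omega)]
    · rw [Function.update_of_ne (by omega), Function.update_of_ne (by omega)]
      exact hs.1 i hi h₂
  · rcases (by omega : i = a ∨ a + 1 ≤ i) with rfl | hi
    · rw [Function.update_self]; exact ⟨hp, hv⟩
    · rw [Function.update_of_ne (by omega)]; exact hs.2 i hi h₂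

end Stabbing

section Signature

variable {δ : ℝ} {π : ℝ → ℝ} {ℓ : ℕ} {t : ℕ → ℝ}

lemma IsDeltaSignature.mem_Icc (hsig : IsDeltaSignature δ π ℓ t) :
    ∀ i ≤ ℓ, t i ∈ Icc (0 : ℝ) 1 := fun i hi => by
  have hmono := monotoneOn_Iic_of_le_succ fun j hj => (hsig.mono j hj).le
  exact ⟨hsig.start ▸ hmono (mem_Iic.2 (Nat.zero_le ℓ)) (mem_Iic.2 hi) (Nat.zero_le i),
    hsig.finish ▸ hmono (mem_Iic.2 hi) (mem_Iic.2 le_rfl) hi⟩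

lemma neg_mem_uIcc_neg_iff {a b c : ℝ} : -a ∈ uIcc (-b) (-c) ↔ a ∈ uIcc b c := by
  simp only [mem_uIcc, neg_le_neg_iff]; tauto

lemma neg_mem_Icc_sub_add_iff {a b δ : ℝ} :
    -a ∈ Icc (-b - δ) (-b + δ) ↔ a ∈ Icc (b - δ) (b + δ) := by
  simp only [mem_Icc]; constructor <;> rintro ⟨h₁, h₂⟩ <;> constructor <;> linarith

lemma IsDeltaSignature.neg (hsig : IsDeltaSignature δ π ℓ t) :
    IsDeltaSignature δ (fun s => -π s) ℓ t where
  one_le := hsig.one_le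
  mono := hsig.mono
  start := hsig.start
  finish := hsig.finish
  nondeg i h₁ h₂ := by simpa only [neg_mem_uIcc_neg_iff] using hsig.nondeg i h₁ h₂
  dir_up i hi h a b ha hab hb := by
    linarith [hsig.dir_down i hi (neg_lt_neg_iff.1 h) a b ha hab hb]
  dir_down i hi h a b ha hab hb := by
    linarith [hsig.dir_up i hi (neg_lt_neg_iff.1 h) a b ha hab hb]
  minedge_int i h₁ h₂ := by simpa only [neg_sub_neg, abs_sub_comm] using hsig.minedge_int i h₁ h₂
  minedge_bnd i h₁ h₂ := by simpa only [neg_sub_neg, abs_sub_comm] using hsig.minedge_bnd i h₁ h₂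
  range_int i h₁ h₂ s hs₁ hs₂ := by
    simpa only [neg_mem_uIcc_neg_iff] using hsig.range_int i h₁ h₂ s hs₁ hs₂
  range_first h s hs₁ hs₂ := by
    simpa only [mem_union, neg_mem_uIcc_neg_iff, neg_mem_Icc_sub_add_iff]
      using hsig.range_first h s hs₁ hs₂
  range_last h s hs₁ hs₂ := by
    simpa only [mem_union, neg_mem_uIcc_neg_iff, neg_mem_Icc_sub_add_iff]
      using hsig.range_last h s hs₁ hs₂
  range_single h s hs₁ hs₂ := by
    simpa only [mem_union, neg_mem_uIcc_neg_iff, neg_mem_Icc_sub_add_iff]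
      using hsig.range_single h s hs₁ hs₂

lemma IsDeltaSignature.isPeak_or_isValley (hsig : IsDeltaSignature δ π ℓ t) {i : ℕ}
    (hi : i + 1 < ℓ) :
    (π (t i) < π (t (i + 1)) ∧ π (t (i + 2)) < π (t (i + 1))) ∨
      (π (t (i + 1)) < π (t i) ∧ π (t (i + 1)) < π (t (i + 2))) := by
  have h := hsig.nondeg (i + 1) (Nat.le_add_left 1 i) hi
  simp only [Nat.add_sub_cancel, mem_uIcc, not_or, not_and_or, not_le] at h
  rcases h with ⟨h₁ | h₁, h₂ | h₂⟩
  · exact Or.inr ⟨h₁, h₂⟩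
  · exact absurd h₁ (lt_asymm h₂)
  · exact absurd h₁ (lt_asymm h₂)
  · exact Or.inl ⟨h₂, h₁⟩

lemma IsDeltaSignature.le_succ_of_mem_edge (hsig : IsDeltaSignature δ π ℓ t) {i : ℕ}
    (hi : i + 1 < ℓ) (hup : π (t i) < π (t (i + 1))) {x : ℝ} (hx : x ∈ Icc (t i) (t (i + 1))) :
    π x ≤ π (t (i + 1)) := by
  rcases Nat.eq_zero_or_pos i with rfl | hi₀
  · have hgap := hsig.minedge_bnd 0 (by omega) (Or.inl rfl)
    rw [abs_of_pos (sub_pos.2 hup)] at hgap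
    rcases hsig.range_first (by omega) x hx.1 hx.2 with h | h
    · rw [uIcc_of_le hup.le] at h; exact h.2
    · linarith [h.2]
  · have h := hsig.range_int i hi₀ (by omega) x hx.1 hx.2
    rw [uIcc_of_le hup.le] at h; exact h.2

lemma IsDeltaSignature.le_of_mem_edge (hsig : IsDeltaSignature δ π ℓ t) {i : ℕ}
    (hi : i < ℓ) (hi₀ : 1 ≤ i) (hdown : π (t (i + 1)) < π (t i)) {x : ℝ}
    (hx : x ∈ Icc (t i) (t (i + 1))) : π x ≤ π (t i) := by
  rcases (by omega : i + 1 = ℓ ∨ i + 2 ≤ ℓ) with rfl | hi₂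
  · have hgap := hsig.minedge_bnd i hi (Or.inr rfl)
    rw [abs_of_neg (sub_neg.2 hdown)] at hgap
    have h := hsig.range_last (by omega) x (by simpa using hx.1) hx.2
    rw [Nat.add_sub_cancel, uIcc_of_ge hdown.le] at h
    rcases h with h | h
    · exact h.2
    · linarith [h.2]
  · have h := hsig.range_int i hi₀ (by omega) x hx.1 hx.2
    rw [uIcc_of_ge hdown.le] at h; exact h.2

lemma IsDeltaSignature.le_of_mem_first_edge (hsig : IsDeltaSignature δ π ℓ t) (hδ : 0 ≤ δ)
    (hdown : π (t 1) < π (t 0)) {x : ℝ} (hx : x ∈ Icc (t 0) (t 1)) : π x ≤ π (t 0) + δ := by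
  rcases hsig.one_le.eq_or_lt with rfl | hℓ
  · have h := hsig.range_single rfl x (hsig.start ▸ hx.1) (hsig.finish ▸ hx.2)
    rw [uIcc_of_ge hdown.le] at h
    rcases h with (h | h) | h <;> linarith [h.2]
  · have h := hsig.range_first hℓ x hx.1 hx.2
    rw [uIcc_of_ge hdown.le] at h
    rcases h with h | h <;> linarith [h.2]

lemma IsDeltaSignature.le_of_mem_last_edge (hsig : IsDeltaSignature δ π ℓ t) (hδ : 0 ≤ δ)
    (hup : π (t (ℓ - 1)) < π (t ℓ)) {x : ℝ} (hx : x ∈ Icc (t (ℓ - 1)) (t ℓ)) :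
    π x ≤ π (t ℓ) + δ := by
  rcases hsig.one_le.eq_or_lt with rfl | hℓ
  · have h := hsig.range_single rfl x (hsig.start ▸ hx.1) (hsig.finish ▸ hx.2)
    rw [uIcc_of_le hup.le] at h
    rcases h with (h | h) | h <;> linarith [h.2]
  · have h := hsig.range_last hℓ x hx.1 hx.2
    rw [uIcc_of_le hup.le] at h
    rcases h with h | h <;> linarith [h.2]

end Signature

section Matching

variable {δ : ℝ} {π τ : ℝ → ℝ} {ℓ : ℕ} {t z : ℕ → ℝ}

lemma exists_isMatching_of_reparam {φ ψ : ℝ → ℝ} (hφ : IsMonotoneReparam φ)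
    (hψ : IsMonotoneReparam ψ) (hδ : ∀ s ∈ Icc (0 : ℝ) 1, |π (φ s) - τ (ψ s)| ≤ δ)
    (ht : ∀ i ≤ ℓ, t i ∈ Icc (0 : ℝ) 1) (hmono : ∀ i < ℓ, t i < t (i + 1))
    (h0 : t 0 = 0) (hℓ : t ℓ = 1) : ∃ z, IsMatching δ π τ ℓ t z := by
  have hℓ0 : ℓ ≠ 0 := by rintro rfl; linarith
  choose u₀ hu₀ using fun i => hφ.surjOn (ht (min i ℓ) (min_le_right i ℓ))
  set u : ℕ → ℝ := fun i => if i = 0 then 0 else if i = ℓ then 1 else u₀ i with hu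
  have hu_mem : ∀ i, u i ∈ Icc (0 : ℝ) 1 := fun i => by
    simp only [hu]; split_ifs
    exacts [left_mem_Icc.2 zero_le_one, right_mem_Icc.2 zero_le_one, (hu₀ i).1]
  have hφu : ∀ i ≤ ℓ, φ (u i) = t i := fun i hi => by
    simp only [hu]; split_ifs with h₀ hℓ'
    · rw [hφ.map_zero, h₀, h0]
    · rw [hφ.map_one, hℓ', hℓ]
    · rw [(hu₀ i).2, min_eq_left hi]
  have hu_mono : ∀ i < ℓ, u i ≤ u (i + 1) := fun i hi =>
    (hφ.monotoneOn.reflect_lt (hu_mem i) (hu_mem (i + 1))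
      (by rw [hφu i hi.le, hφu (i + 1) hi]; exact hmono i hi)).le
  refine ⟨fun i => ψ (u i), fun i => hψ.mapsTo (hu_mem i), ?_, ?_,
    fun i hi => hψ.monotoneOn (hu_mem i) (hu_mem (i + 1)) (hu_mono i hi), fun i hi => ?_,
    fun i hi s hs => ?_⟩
  · simp [hu, hψ.map_zero]
  · simp [hu, hℓ0, hψ.map_one]
  · rw [abs_sub_comm, ← hφu i hi]
    exact hδ _ (hu_mem i)
  · have hsub : Icc (u i) (u (i + 1)) ⊆ Icc 0 1 := Icc_subset_Icc (hu_mem i).1 (hu_mem _).2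
    obtain ⟨c, hc, rfl⟩ := intermediate_value_Icc (hu_mono i hi) (hψ.continuousOn.mono hsub) hs
    refine ⟨φ c, ⟨?_, ?_⟩, by rw [abs_sub_comm]; exact hδ c (hsub hc)⟩
    · rw [← hφu i hi.le]; exact hφ.monotoneOn (hu_mem i) (hsub hc) hc.1
    · rw [← hφu (i + 1) hi]; exact hφ.monotoneOn (hsub hc) (hu_mem _) hc.2

lemma IsMatching.of_tendsto (hπ : ContinuousOn π (Icc 0 1)) (hτ : ContinuousOn τ (Icc 0 1))
    (ht : ∀ i ≤ ℓ, t i ∈ Icc (0 : ℝ) 1) (hmono : ∀ i < ℓ, t i ≤ t (i + 1)) {ε : ℕ → ℝ}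
    (hε : Tendsto ε atTop (𝓝 0)) {y : ℕ → ℕ → ℝ} (hy : ∀ n, IsMatching (δ + ε n) π τ ℓ t (y n))
    (hyz : Tendsto y atTop (𝓝 z)) : IsMatching δ π τ ℓ t z := by
  have hyz' : ∀ i, Tendsto (fun n => y n i) atTop (𝓝 (z i)) := tendsto_pi_nhds.1 hyz
  have hδε : Tendsto (fun n => δ + ε n) atTop (𝓝 δ) := by simpa using hε.const_add δ
  have hmem : ∀ i, z i ∈ Icc (0 : ℝ) 1 := fun i =>
    isClosed_Icc.mem_of_tendsto (hyz' i) (Eventually.of_forall fun n => (hy n).mem i)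
  have hτy : ∀ i, Tendsto (fun n => τ (y n i)) atTop (𝓝 (τ (z i))) := fun i =>
    (hτ _ (hmem i)).tendsto.comp
      (tendsto_nhdsWithin_iff.2 ⟨hyz' i, Eventually.of_forall fun n => (hy n).mem i⟩)
  have habs : ∀ i ≤ ℓ, |τ (z i) - π (t i)| ≤ δ := fun i hi =>
    le_of_tendsto_of_tendsto' (((hτy i).sub tendsto_const_nhds).abs) hδε
      fun n => (hy n).abs_sub_le i hi
  refine ⟨hmem, ?_, ?_, fun i hi => le_of_tendsto_of_tendsto' (hyz' i) (hyz' (i + 1))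
    fun n => (hy n).mono i hi, habs, fun i hi s hs => ?_⟩
  · exact tendsto_nhds_unique (hyz' 0) (by simp only [fun n => (hy n).start, tendsto_const_nhds])
  · exact tendsto_nhds_unique (hyz' ℓ) (by simp only [fun n => (hy n).finish, tendsto_const_nhds])
  rcases hs.1.eq_or_lt with rfl | hzs
  · exact ⟨t i, left_mem_Icc.2 (hmono i hi), habs i hi.le⟩
  rcases hs.2.eq_or_lt with rfl | hsz
  · exact ⟨t (i + 1), right_mem_Icc.2 (hmono i hi), habs (i + 1) hi⟩
  -- the distance to the compact piece of `π` is attained, and is `≤ δ + ε n` for all large `n`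
  have hsub : Icc (t i) (t (i + 1)) ⊆ Icc 0 1 := Icc_subset_Icc (ht i hi.le).1 (ht _ hi).2
  obtain ⟨x, hx, hmin⟩ := isCompact_Icc.exists_isMinOn (nonempty_Icc.2 (hmono i hi))
    (continuousOn_const.sub (hπ.mono hsub)).abs
  refine ⟨x, hx, ge_of_tendsto hδε ?_⟩
  filter_upwards [(hyz' i).eventually_lt_const hzs, (hyz' (i + 1)).eventually_const_lt hsz]
    with n hn₁ hn₂
  obtain ⟨x', hx', hx's⟩ := (hy n).exists_abs_sub_le i hi s ⟨hn₁.le, hn₂.le⟩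
  exact (hmin hx').trans hx's

lemma exists_isMatching_of_frechetDist_le (hπ : ContinuousOn π (Icc 0 1))
    (hτ : ContinuousOn τ (Icc 0 1)) (ht : ∀ i ≤ ℓ, t i ∈ Icc (0 : ℝ) 1)
    (hmono : ∀ i < ℓ, t i < t (i + 1)) (h0 : t 0 = 0) (hℓ : t ℓ = 1)
    (hd : frechetDist π τ ≤ δ) : ∃ z, IsMatching δ π τ ℓ t z := by
  have hε : ∀ n : ℕ, ∃ y, IsMatching (δ + 1 / ((n : ℝ) + 1)) π τ ℓ t y := fun n => by
    have hn : (0 : ℝ) < 1 / ((n : ℝ) + 1) := by positivity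
    obtain ⟨φ, ψ, hφ, hψ, h⟩ :=
      exists_reparam_of_frechetDist_lt hπ hτ (hd.trans_lt (lt_add_of_pos_right δ hn))
    exact exists_isMatching_of_reparam hφ hψ h ht hmono h0 hℓ
  choose y hy using hε
  obtain ⟨z, -, g, hg, hyz⟩ := (isCompact_univ_pi fun _ => isCompact_Icc).tendsto_subseq
    (s := univ.pi fun _ : ℕ => Icc (0 : ℝ) 1) fun n => mem_univ_pi.2 (hy n).mem
  exact ⟨z, .of_tendsto hπ hτ ht (fun i hi => (hmono i hi).le)
    (tendsto_one_div_add_atTop_nhds_zero_nat.comp hg.tendsto_atTop) (fun n => hy (g n)) hyz⟩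

lemma IsMatching.neg (hz : IsMatching δ π τ ℓ t z) :
    IsMatching δ (fun s => -π s) (fun s => -τ s) ℓ t z where
  mem := hz.mem
  start := hz.start
  finish := hz.finish
  mono := hz.mono
  abs_sub_le i hi := by simpa only [neg_sub_neg, abs_sub_comm] using hz.abs_sub_le i hi
  exists_abs_sub_le i hi s hs := by
    simpa only [neg_sub_neg, abs_sub_comm] using hz.exists_abs_sub_le i hi s hs

lemma IsMatching.le_add_of_forall_le (hz : IsMatching δ π τ ℓ t z) {j : ℕ} (hj : j < ℓ) {M : ℝ}
    (hM : ∀ x ∈ Icc (t j) (t (j + 1)), π x ≤ M) : ∀ s ∈ Icc (z j) (z (j + 1)), τ s ≤ M + δ :=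
  fun s hs => by
    obtain ⟨x, hx, h⟩ := hz.exists_abs_sub_le j hj s hs
    linarith [hM x hx, (abs_le.1 h).2]

lemma IsMatching.vertexAt_zero (hsig : IsDeltaSignature 0 π ℓ t) (hz : IsMatching 0 π τ ℓ t z) :
    VertexAt τ 0 := by
  wlog hdown : π (t 1) < π (t 0) generalizing π τ
  · have hne : π (t 1) ≠ π (t 0) := fun h => by
      simpa [h] using hsig.minedge_bnd 0 hsig.one_le (Or.inl rfl)
    exact (this hsig.neg hz.neg (neg_lt_neg ((not_lt.1 hdown).lt_of_ne hne.symm))).of_neg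
  have hτ0 : τ 0 = π (t 0) := by
    simpa [hz.start, sub_eq_zero] using hz.abs_sub_le 0 (Nat.zero_le ℓ)
  have hτ1 : τ (z 1) = π (t 1) := by simpa [sub_eq_zero] using hz.abs_sub_le 1 hsig.one_le
  have hmax : IsMaxOn τ (Icc 0 (z 1)) 0 := fun s hs => by
    simpa [hτ0] using hz.le_add_of_forall_le hsig.one_le
      (fun x hx => hsig.le_of_mem_first_edge le_rfl hdown hx) s (hz.start ▸ hs)
  have hz1 : 0 < z 1 := (hz.mem 1).1.lt_of_ne fun h => by
    rw [← h, hτ0] at hτ1; linarith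
  exact vertexAt_of_isExtrOn (left_mem_Icc.2 zero_le_one) hmax.isExtr (Or.inr le_rfl)
    (Or.inl hz1)

lemma IsMatching.vertexAt_one (hsig : IsDeltaSignature 0 π ℓ t) (hz : IsMatching 0 π τ ℓ t z) :
    VertexAt τ 1 := by
  obtain ⟨m, rfl⟩ : ∃ m, ℓ = m + 1 := ⟨ℓ - 1, by have := hsig.one_le; omega⟩
  wlog hup : π (t m) < π (t (m + 1)) generalizing π τ
  · have hne : π (t (m + 1)) ≠ π (t m) := fun h => by
      simpa [h] using hsig.minedge_bnd m (by omega) (Or.inr (by omega))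
    exact (this hsig.neg hz.neg (neg_lt_neg ((not_lt.1 hup).lt_of_ne hne))).of_neg
  have hτ1 : τ 1 = π (t (m + 1)) := by
    simpa [hz.finish, sub_eq_zero] using hz.abs_sub_le (m + 1) le_rfl
  have hτm : τ (z m) = π (t m) := by simpa [sub_eq_zero] using hz.abs_sub_le m (by omega)
  have hedge : ∀ x ∈ Icc (t m) (t (m + 1)), π x ≤ π (t (m + 1)) + 0 := fun x hx =>
    hsig.le_of_mem_last_edge le_rfl (by simpa using hup) (by simpa using hx)
  have hmax : IsMaxOn τ (Icc (z m) 1) 1 := fun s hs => by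
    simpa [hτ1] using hz.le_add_of_forall_le (Nat.lt_succ_self m) hedge s (hz.finish ▸ hs)
  have hzm : z m < 1 := (hz.mem m).2.lt_of_ne fun h => by
    rw [h, hτ1] at hτm; linarith
  exact vertexAt_of_isExtrOn (right_mem_Icc.2 zero_le_one) hmax.isExtr (Or.inl hzm)
    (Or.inr le_rfl)

lemma IsMatching.exists_vertexAt_first (hδ : 0 ≤ δ) (hτ : ContinuousOn τ (Icc 0 1))
    (hsig : IsDeltaSignature δ π ℓ t) (hz : IsMatching δ π τ ℓ t z) {b : ℝ} (hb : 0 ≤ b)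
    (hb0 : b = 0 → VertexAt τ 0) : ∃ p ∈ Icc 0 b, VertexAt τ p ∧ |τ p - π (t 0)| ≤ δ := by
  have h0 : |τ 0 - π (t 0)| ≤ δ := hz.start ▸ hz.abs_sub_le 0 (Nat.zero_le ℓ)
  rcases hδ.eq_or_lt with rfl | hδ
  · exact ⟨0, ⟨le_rfl, hb⟩, hz.vertexAt_zero hsig, h0⟩
  rcases hb.eq_or_lt with rfl | hb
  · exact ⟨0, ⟨le_rfl, le_rfl⟩, hb0 rfl, h0⟩
  exact exists_vertexAt_near_zero hτ hδ h0 hb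

lemma IsMatching.exists_vertexAt_last (hδ : 0 ≤ δ) (hτ : ContinuousOn τ (Icc 0 1))
    (hsig : IsDeltaSignature δ π ℓ t) (hz : IsMatching δ π τ ℓ t z) {a : ℝ} (ha : a ≤ 1)
    (ha1 : a = 1 → VertexAt τ 1) : ∃ p ∈ Icc a 1, VertexAt τ p ∧ |τ p - π (t ℓ)| ≤ δ := by
  have h1 : |τ 1 - π (t ℓ)| ≤ δ := hz.finish ▸ hz.abs_sub_le ℓ le_rfl
  rcases hδ.eq_or_lt with rfl | hδ
  · exact ⟨1, ⟨ha, le_rfl⟩, hz.vertexAt_one hsig, h1⟩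
  rcases ha.eq_or_lt with rfl | ha
  · exact ⟨1, ⟨le_rfl, le_rfl⟩, ha1 rfl, h1⟩
  exact exists_vertexAt_near_one hτ hδ h1 ha

lemma IsMatching.exists_vertexAt_interior (hτ : ContinuousOn τ (Icc 0 1))
    (hsig : IsDeltaSignature δ π ℓ t) (hz : IsMatching δ π τ ℓ t z) {i : ℕ} (hi : i + 1 < ℓ)
    {L : ℝ} (hLz : L ≤ z (i + 1)) (hL : |τ L - π (t i)| ≤ δ) (hL0 : i = 0 → L ≤ 0) :
    ∃ p ∈ Icc L (z (i + 2)), VertexAt τ p ∧ |τ p - π (t (i + 1))| ≤ δ := by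
  wlog hpeak : π (t i) < π (t (i + 1)) ∧ π (t (i + 2)) < π (t (i + 1)) generalizing π τ
  · have hvalley := (hsig.isPeak_or_isValley hi).resolve_left hpeak
    obtain ⟨p, hp, hpv, hpd⟩ := this (τ := fun s => -τ s) hτ.neg hsig.neg hz.neg
      (by simpa only [neg_sub_neg, abs_sub_comm] using hL)
      ⟨neg_lt_neg hvalley.1, neg_lt_neg hvalley.2⟩
    exact ⟨p, hp, hpv.of_neg, by simpa only [neg_sub_neg, abs_sub_comm] using hpd⟩
  obtain ⟨hup, hdown⟩ := hpeak
  -- on the window `[a, z (i + 2)]`, `τ ≤ π (t (i + 1)) + δ`, and the minimum edge lengths make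
  -- `τ (z (i + 1))` exceed `τ` at the ends of the window that are interior to `[0, 1]`
  set a := max L (z i) with ha
  have haz : a ≤ z (i + 1) := max_le hLz (hz.mono i (by omega))
  have hwin : ∀ s ∈ Icc a (z (i + 2)), τ s ≤ π (t (i + 1)) + δ := fun s hs => by
    rcases le_total s (z (i + 1)) with h | h
    · exact hz.le_add_of_forall_le (by omega) (fun x hx => hsig.le_succ_of_mem_edge hi hup hx) s
        ⟨(le_max_right _ _).trans hs.1, h⟩
    · exact hz.le_add_of_forall_le hi (fun x hx => hsig.le_of_mem_edge hi (Nat.le_add_left 1 i)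
        hdown hx) s ⟨h, hs.2⟩
  have hlow := (abs_le.1 (hz.abs_sub_le (i + 1) hi.le)).1
  have hleft : τ a < τ (z (i + 1)) ∨ a ≤ 0 := by
    rcases Nat.eq_zero_or_pos i with rfl | hi₀
    · exact Or.inr (max_le (hL0 rfl) hz.start.le)
    have hgap := hsig.minedge_int i hi₀ (by omega)
    rw [abs_of_pos (sub_pos.2 hup)] at hgap
    left
    rcases max_choice L (z i) with h | h <;> rw [ha, h]
    · linarith [(abs_le.1 hL).2]
    · linarith [(abs_le.1 (hz.abs_sub_le i (by omega))).2]
  have hright : τ (z (i + 2)) < τ (z (i + 1)) ∨ 1 ≤ z (i + 2) := by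
    rcases (by omega : i + 2 = ℓ ∨ i + 2 < ℓ) with h | h
    · exact Or.inr (by rw [h, hz.finish])
    have hgap := hsig.minedge_int (i + 1) (by omega) (by omega)
    rw [abs_of_neg (sub_neg.2 hdown)] at hgap
    exact Or.inl (by linarith [(abs_le.1 (hz.abs_sub_le (i + 2) h.le)).2])
  obtain ⟨p, hp, hpv, hpz⟩ := exists_vertexAt_mem_Icc_ge hτ ⟨haz, hz.mono (i + 1) hi⟩
    ((hz.mem i).1.trans (le_max_right _ _)) (hz.mem _).2 hleft hright
  exact ⟨p, ⟨(le_max_left _ _).trans hp.1, hp.2⟩, hpv,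
    abs_le.2 ⟨by linarith, by linarith [hwin p hp]⟩⟩

lemma IsMatching.exists_isVertexStabbing_interior (hτ : ContinuousOn τ (Icc 0 1))
    (hsig : IsDeltaSignature δ π ℓ t) (hz : IsMatching δ π τ ℓ t z) :
    ∀ k, k + 1 < ℓ → ∃ s, IsVertexStabbing δ τ (fun i => π (t i)) 1 (k + 1) s ∧
      s (k + 1) ≤ z (k + 2) := by
  intro k
  induction k with
  | zero =>
    intro hℓ
    obtain ⟨p, hp, hpv, hpd⟩ := hz.exists_vertexAt_interior hτ hsig hℓ (hz.mem 1).1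
      (hz.start ▸ hz.abs_sub_le 0 (Nat.zero_le ℓ)) fun _ => le_rfl
    exact ⟨_, isVertexStabbing_const hpv hpd, hp.2⟩
  | succ k ih =>
    intro hℓ
    obtain ⟨s, hs, hsz⟩ := ih (by omega)
    obtain ⟨p, hp, hpv, hpd⟩ := hz.exists_vertexAt_interior hτ hsig hℓ hsz
      (hs.2 (k + 1) (by omega) le_rfl).2 (by omega)
    refine ⟨_, hs.snoc hp.1 hpv hpd, ?_⟩
    rw [Function.update_self]
    exact hp.2

lemma IsMatching.exists_isVertexStabbing_one (hδ : 0 ≤ δ) (hτ : ContinuousOn τ (Icc 0 1))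
    (hsig : IsDeltaSignature δ π ℓ t) (hz : IsMatching δ π τ ℓ t z) :
    ∃ s, IsVertexStabbing δ τ (fun i => π (t i)) 1 ℓ s := by
  obtain ⟨m, rfl⟩ : ∃ m, ℓ = m + 1 := ⟨ℓ - 1, by have := hsig.one_le; omega⟩
  rcases m with _ | m
  · obtain ⟨p, -, hpv, hpd⟩ := hz.exists_vertexAt_last hδ hτ hsig zero_le_one (by norm_num)
    exact ⟨_, isVertexStabbing_const hpv hpd⟩
  · obtain ⟨s, hs, -⟩ := hz.exists_isVertexStabbing_interior hτ hsig m (by omega)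
    have hm := (hs.2 (m + 1) (by omega) le_rfl).1
    obtain ⟨p, hp, hpv, hpd⟩ := hz.exists_vertexAt_last hδ hτ hsig hm.1.2 fun h => h ▸ hm
    exact ⟨_, hs.snoc hp.1 hpv hpd⟩

end Matching

/-- if `σ` (with vertices `π (t 0), …, π (t ℓ)`) is a `δ`-signature of `π`
and `d_F(π,τ) ≤ δ`, then `τ` has vertices, in order, inside the ranges
`[π (t i) - δ, π (t i) + δ]`. -/
theorem signature_ranges_stabbed (δ : ℝ) (hδ : 0 ≤ δ) (π τ : ℝ → ℝ)
    (hπ : ContinuousOn π (Set.Icc 0 1)) (hτ : ContinuousOn τ (Set.Icc 0 1))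
    (ℓ : ℕ) (t : ℕ → ℝ) (hsig : IsDeltaSignature δ π ℓ t)
    (hd : frechetDist π τ ≤ δ) :
    ∃ s : ℕ → ℝ, (∀ i < ℓ, s i ≤ s (i + 1)) ∧
      ∀ i ≤ ℓ, VertexAt τ (s i) ∧ |τ (s i) - π (t i)| ≤ δ := by
  obtain ⟨z, hz⟩ := exists_isMatching_of_frechetDist_le hπ hτ hsig.mem_Icc hsig.mono hsig.start
    hsig.finish hd
  obtain ⟨s, hs⟩ := hz.exists_isVertexStabbing_one hδ hτ hsig
  have h1 := (hs.2 1 le_rfl hsig.one_le).1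
  obtain ⟨p, hp, hpv, hpd⟩ := hz.exists_vertexAt_first hδ hτ hsig h1.1.1 fun h => h ▸ h1
  have hs' := hs.cons hp.2 hpv hpd
  exact ⟨_, fun i hi => hs'.1 i (Nat.zero_le i) hi, fun i hi => hs'.2 i (Nat.zero_le i) hi⟩
end

section
/- Let $X \subseteq \mathbb{R}$ be a non-empty bounded set with diameter at most $\Delta$, let $w > 0$, and let $z$ be chosen uniformly at random from $[0, w]$. Define $g_{w,z}(x) = \lfloor (x - z)/w \rfloor$. Then the probability that there exist $x, y \in X$ with $g_{w,z}(x) \ne g_{w,z}(y)$ is at most $\Delta / w$. -/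
open Set

open MeasureTheory ProbabilityTheory in
/-- for a nonempty set `X ⊆ ℝ` of diameter at most `Δ` and a uniformly random
shift `z ∈ [0,w]`, the probability that the shifted grid of width `w` separates two points
of `X` is at most `Δ / w`. -/
theorem grid_separation_prob_le (X : Set ℝ) (hX : X.Nonempty) (Δ w : ℝ) (hw : 0 < w)
    (hΔ : ∀ x ∈ X, ∀ y ∈ X, |x - y| ≤ Δ) :
    (volume[|Set.Icc (0:ℝ) w])
        {z | ∃ x ∈ X, ∃ y ∈ X, ⌊(x - z) / w⌋ ≠ ⌊(y - z) / w⌋}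
      ≤ ENNReal.ofReal (Δ / w) := by
  obtain ⟨x₀, hx₀⟩ := hX
  have hΔ0 : 0 ≤ Δ := by simpa using hΔ x₀ hx₀ x₀ hx₀
  have hba : BddAbove X := ⟨x₀ + Δ, fun y hy => by
    have := abs_le.mp (hΔ y hy x₀ hx₀); linarith [this.2]⟩
  have hbb : BddBelow X := ⟨x₀ - Δ, fun y hy => by
    have := abs_le.mp (hΔ y hy x₀ hx₀); linarith [this.1]⟩
  set a := sInf X with ha
  set b := sSup X with hb
  have hab : b - a ≤ Δ := by
    have h1 : b ≤ a + Δ := csSup_le ⟨x₀, hx₀⟩ (fun y hy => by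
      have h2 : y - Δ ≤ a := le_csInf ⟨x₀, hx₀⟩ (fun x hx => by
        have := abs_le.mp (hΔ y hy x hx); linarith [this.2])
      linarith)
    linarith
  set S := {z : ℝ | ∃ x ∈ X, ∃ y ∈ X, ⌊(x - z) / w⌋ ≠ ⌊(y - z) / w⌋} with hS
  have hvol : volume (Set.Icc (0:ℝ) w) = ENNReal.ofReal w := by
    rw [Real.volume_Icc]; norm_num
  have key : volume (Set.Icc 0 w ∩ S) ≤ ENNReal.ofReal Δ := by
    rcases le_or_gt w Δ with hwd | hwd
    · calc volume (Set.Icc 0 w ∩ S) ≤ volume (Set.Icc (0:ℝ) w) :=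
            measure_mono Set.inter_subset_left
        _ = ENNReal.ofReal w := hvol
        _ ≤ ENNReal.ofReal Δ := ENNReal.ofReal_le_ofReal hwd
    · set k0 : ℤ := ⌊a / w⌋ with hk0
      set u : ℝ := a - w * k0 with hu
      have hdiv : a / w * w = a := div_mul_cancel₀ a hw.ne'
      have hu0 : 0 ≤ u := by
        have h1 : (k0:ℝ) ≤ a / w := Int.floor_le _
        nlinarith [mul_le_mul_of_nonneg_right h1 hw.le]
      have huw : u < w := by
        have h2 : a / w < k0 + 1 := Int.lt_floor_add_one _
        nlinarith [mul_lt_mul_of_pos_right h2 hw]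
      have hsub : Set.Icc 0 w ∩ S ⊆
          Set.Icc 0 (max (u + Δ - w) 0) ∪ Set.Ioc u (min (u + Δ) w) := by
        rintro z ⟨⟨hz0, hzw⟩, x, hx, y, hy, hne⟩
        obtain ⟨p, hp, q, hq, hpq⟩ : ∃ p ∈ X, ∃ q ∈ X, ⌊(p - z)/w⌋ < ⌊(q - z)/w⌋ := by
          rcases hne.lt_or_gt with h' | h'
          · exact ⟨x, hx, y, hy, h'⟩
          · exact ⟨y, hy, x, hx, h'⟩
        set k : ℤ := ⌊(q - z)/w⌋ with hk
        have hzle : z ≤ b - k * w := by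
          have h1 : (k:ℝ) ≤ (q - z)/w := Int.floor_le _
          have h2 : (k:ℝ) * w ≤ q - z := (le_div_iff₀ hw).mp h1
          have h3 : q ≤ b := le_csSup hba hq
          linarith
        have hzgt : a - k * w < z := by
          have h1 : (p - z)/w < (k:ℝ) := Int.floor_lt.mp hpq
          have h2 : p - z < k * w := (div_lt_iff₀ hw).mp h1
          have h3 : a ≤ p := csInf_le hbb hp
          linarith
        set m : ℤ := k0 - k with hm
        have hEq : a - (k:ℝ) * w = u + w * (m:ℝ) := by
          rw [hu, hm]; push_cast; ring
        have hzgt' : u + w * (m:ℝ) < z := by rw [← hEq]; exact hzgt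
        have hzle' : z ≤ u + w * (m:ℝ) + Δ := by
          have : z ≤ (a - k * w) + (b - a) := by linarith
          rw [hEq] at this; linarith
        have hm0 : m ≤ 0 := by
          by_contra hcon
          push_neg at hcon
          have h1 : (1:ℝ) ≤ (m:ℝ) := by exact_mod_cast hcon
          nlinarith [mul_le_mul_of_nonneg_left h1 hw.le]
        have hm1 : -1 ≤ m := by
          by_contra hcon
          push_neg at hcon
          have h0 : m ≤ -2 := by omega
          have h1 : (m:ℝ) ≤ -2 := by exact_mod_cast h0
          nlinarith [mul_le_mul_of_nonneg_left h1 hw.le]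
        have : m = 0 ∨ m = -1 := by omega
        rcases this with hm' | hm'
        · right
          rw [hm'] at hzgt' hzle'
          push_cast at hzgt' hzle'
          exact ⟨by linarith, le_min (by linarith) hzw⟩
        · left
          rw [hm'] at hzle'
          push_cast at hzle'
          exact ⟨hz0, le_max_of_le_left (by linarith)⟩
      have h1 : (0:ℝ) ≤ max (u + Δ - w) 0 - 0 := by simp
      have h2 : (0:ℝ) ≤ min (u + Δ) w - u := by
        have := le_min (show u ≤ u + Δ by linarith) huw.le
        linarith
      calc volume (Set.Icc 0 w ∩ S)
          ≤ volume (Set.Icc 0 (max (u + Δ - w) 0) ∪ Set.Ioc u (min (u + Δ) w)) :=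
            measure_mono hsub
        _ ≤ volume (Set.Icc (0:ℝ) (max (u + Δ - w) 0)) + volume (Set.Ioc u (min (u + Δ) w)) :=
            measure_union_le _ _
        _ = ENNReal.ofReal (max (u + Δ - w) 0 - 0) + ENNReal.ofReal (min (u + Δ) w - u) := by
            rw [Real.volume_Icc, Real.volume_Ioc]
        _ ≤ ENNReal.ofReal Δ := by
            rw [← ENNReal.ofReal_add h1 h2]
            apply ENNReal.ofReal_le_ofReal
            rcases le_total (u + Δ) w with h' | h'
            · rw [min_eq_left h', max_eq_right (by linarith : u + Δ - w ≤ 0)]; linarith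
            · rw [min_eq_right h', max_eq_left (by linarith : 0 ≤ u + Δ - w)]; linarith
  rw [ProbabilityTheory.cond_apply measurableSet_Icc]
  calc (volume (Set.Icc (0:ℝ) w))⁻¹ * volume (Set.Icc 0 w ∩ S)
      ≤ (ENNReal.ofReal w)⁻¹ * ENNReal.ofReal Δ := by
        rw [hvol]; exact mul_le_mul_right key _
    _ = ENNReal.ofReal (Δ / w) := by
        rw [ENNReal.ofReal_div_of_pos hw, ENNReal.div_eq_inv_mul]
end

section
/- Let $\pi, \tau$ be curves in $\mathbb{R}$ with $d_F(\pi, \tau) \le \delta$, and let $\sigma_\pi = \langle \pi(p_1), \ldots, \pi(p_\ell) \rangle$ be a $\delta$-signature of $\pi$. Suppose $0 \le t_1 < t_2 \le 1$ are parameters such that some optimal matching matches each of $\tau(t_1)$ and $\tau(t_2)$ with at least one point of the subcurve $\pi[p_i, p_{i+1}]$ for some $i \in [\ell - 1]$. Then: if $\pi(p_i) < \pi(p_{i+1})$ then $\tau(t_2) \ge \tau(t_1) - 4\delta$, and if $\pi(p_i) > \pi(p_{i+1})$ then $\tau(t_2) \le \tau(t_1) + 4\delta$. -/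
open Set

/-- points of `τ` matched by an optimal matching to points of a single
signature edge of `π` go backwards by at most `4δ` relative to the edge direction. -/
theorem matched_points_weak_direction (δ : ℝ) (π τ : ℝ → ℝ)
    (hπ : ContinuousOn π (Set.Icc 0 1)) (hτ : ContinuousOn τ (Set.Icc 0 1))
    (ℓ : ℕ) (p : ℕ → ℝ) (hsig : IsDeltaSignature δ π ℓ p)
    (f g : ℝ → ℝ)
    (hfc : ContinuousOn f (Set.Icc 0 1)) (hgc : ContinuousOn g (Set.Icc 0 1))
    (hfm : MonotoneOn f (Set.Icc 0 1)) (hgm : MonotoneOn g (Set.Icc 0 1))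
    (hf0 : f 0 = 0) (hf1 : f 1 = 1) (hg0 : g 0 = 0) (hg1 : g 1 = 1)
    (hopt : ∀ α ∈ Set.Icc (0:ℝ) 1, |π (f α) - τ (g α)| ≤ δ)
    (i : ℕ) (hi : i < ℓ)
    (t₁ t₂ : ℝ) (ht₁ : 0 ≤ t₁) (ht₁₂ : t₁ < t₂) (ht₂ : t₂ ≤ 1)
    (α₁ α₂ : ℝ) (hα₁ : α₁ ∈ Set.Icc (0:ℝ) 1) (hα₂ : α₂ ∈ Set.Icc (0:ℝ) 1)
    (hm₁ : g α₁ = t₁ ∧ f α₁ ∈ Set.Icc (p i) (p (i + 1)))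
    (hm₂ : g α₂ = t₂ ∧ f α₂ ∈ Set.Icc (p i) (p (i + 1))) :
    (π (p i) < π (p (i + 1)) → τ t₁ - 4 * δ ≤ τ t₂) ∧
    (π (p (i + 1)) < π (p i) → τ t₂ ≤ τ t₁ + 4 * δ) := by
  obtain ⟨hg₁, hf₁⟩ := hm₁
  obtain ⟨hg₂, hf₂⟩ := hm₂
  have hα : α₁ ≤ α₂ := by
    by_contra h
    push_neg at h
    have := hgm hα₂ hα₁ h.le
    rw [hg₁, hg₂] at this
    exact absurd this (not_le.mpr ht₁₂)
  have hff : f α₁ ≤ f α₂ := hfm hα₁ hα₂ hα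
  have h₁ := hopt α₁ hα₁
  have h₂ := hopt α₂ hα₂
  rw [hg₁, abs_sub_le_iff] at h₁
  rw [hg₂, abs_sub_le_iff] at h₂
  constructor
  · intro hup
    have := hsig.dir_up i hi hup (f α₁) (f α₂) hf₁.1 hff hf₂.2
    linarith [h₁.1, h₁.2, h₂.1, h₂.2]
  · intro hdn
    have := hsig.dir_down i hi hdn (f α₁) (f α₂) hf₁.1 hff hf₂.2
    linarith [h₁.1, h₁.2, h₂.1, h₂.2]
end

section
/- For binary vectors $a, b \in \{0,1\}^D$, define point sequences $A(a)$ and $B(b)$ in $\mathbb{R}^2$ of length $D$ as follows, using the points $\alpha_0 = (-1.61, 0.5)$, $\alpha_1 = (-1.61, -0.5)$, $\alpha_0' = (1.61, 0.5)$, $\alpha_1' = (1.61, -0.5)$, $\beta_0 = (-0.61, 0.5)$, $\beta_1 = (-0.61, -0.5)$, $\beta_0' = (0.61, 0.5)$, $\beta_1' = (0.61, -0.5)$: the $j$-th point of $A(a)$ is $\alpha_{a_j}$ if $j$ is odd and $\alpha_{a_j}'$ if $j$ is even; the $j$-th point of $B(b)$ is $\beta_{b_j}$ if $j$ is odd and $\beta_{b_j}'$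 if $j$ is even. Then: if $a = b$, the discrete Fréchet distance satisfies $d_{dF}(A(a), B(b)) \le 1$; if $a \ne b$, then $d_{dF}(A(a), B(b)) \ge \sqrt{2}$; moreover, for any non-parallel traversal $T$ of $A(a)$ and $B(b)$, $\max_{(i,j) \in T} \|A(a)_i - B(b)_j\|_2 \ge 2$. -/
open Set

/-- A point of the Euclidean plane. -/
noncomputable def pt2 (x y : ℝ) : EuclideanSpace ℝ (Fin 2) :=
  (WithLp.equiv 2 (Fin 2 → ℝ)).symm ![x, y]

/-- Alice's vector gadget: the `j`-th point (0-based) encodes bit `a j`. -/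
noncomputable def Aseq (a : ℕ → Bool) (j : ℕ) : EuclideanSpace ℝ (Fin 2) :=
  if j % 2 = 0 then (if a j then pt2 (-1.61) (-0.5) else pt2 (-1.61) 0.5)
  else (if a j then pt2 1.61 (-0.5) else pt2 1.61 0.5)

/-- Bob's vector gadget: the `j`-th point (0-based) encodes bit `b j`. -/
noncomputable def Bseq (b : ℕ → Bool) (j : ℕ) : EuclideanSpace ℝ (Fin 2) :=
  if j % 2 = 0 then (if b j then pt2 (-0.61) (-0.5) else pt2 (-0.61) 0.5)
  else (if b j then pt2 0.61 (-0.5) else pt2 0.61 0.5)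

/-!
Consecutive points of either gadget alternate between the left (`x < 0`) and the right
(`x > 0`) half-plane, at horizontal offset `1` between `A` and `B` on the same side and
`2.22` across. Hence a pair of points of equal index parity is at distance `1` or `√2`
according as the encoded bits agree, while a pair of opposite parity is at distance `≥ 2`.
A traversal avoiding opposite-parity pairs can never advance one index alone, so it is
the parallel one; every other traversal costs at least `2 > √2`.
-/

lemma dist_pt2 (x y x' y' : ℝ) :
    dist (pt2 x y) (pt2 x' y') = √((x - x') ^ 2 + (y - y') ^ 2) := by
  simp [pt2, EuclideanSpace.dist_eq, Fin.sum_univ_two, Real.dist_eq, sq_abs]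

section Gadget

variable (a b : ℕ → Bool) (i j : ℕ)

lemma dist_Aseq_Bseq_of_parity_eq_of_eq (h : i % 2 = j % 2) (hab : a i = b j) :
    dist (Aseq a i) (Bseq b j) = 1 := by
  unfold Aseq Bseq
  rcases Nat.mod_two_eq_zero_or_one i with hi | hi <;>
    rw [hi] at h <;> rw [hi, ← h] <;> cases hai : a i <;>
      norm_num [← hab, hai, dist_pt2]

lemma dist_Aseq_Bseq_of_parity_eq_of_ne (h : i % 2 = j % 2) (hab : a i ≠ b j) :
    dist (Aseq a i) (Bseq b j) = √2 := by
  unfold Aseq Bseq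
  have hb : b j = !a i := by cases h₁ : a i <;> cases h₂ : b j <;> simp_all
  rcases Nat.mod_two_eq_zero_or_one i with hi | hi <;>
    rw [hi] at h <;> rw [hi, ← h] <;> cases hai : a i <;>
      norm_num [hai ▸ hb, dist_pt2]

lemma two_le_dist_Aseq_Bseq_of_parity_ne (h : i % 2 ≠ j % 2) :
    2 ≤ dist (Aseq a i) (Bseq b j) := by
  unfold Aseq Bseq
  rcases Nat.mod_two_eq_zero_or_one i with hi | hi <;>
    rcases Nat.mod_two_eq_zero_or_one j with hj | hj <;> simp only [hi, hj] at h ⊢ <;>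
      first
      | exact absurd rfl h
      | cases a i <;> cases b j <;> simp [dist_pt2] <;>
          exact (Real.le_sqrt' two_pos).mpr (by norm_num)

end Gadget

section Traversal

/-- The traversal `(0,0), (1,1), …, (D-1,D-1)`. -/
def parallelTraversal (D : ℕ) : List (ℕ × ℕ) :=
  (List.range D).map fun i => (i, i)

lemma mem_parallelTraversal {D : ℕ} {ij : ℕ × ℕ} :
    ij ∈ parallelTraversal D ↔ ∃ i < D, (i, i) = ij := by
  simp [parallelTraversal]

lemma isTraversal_parallelTraversal {D : ℕ} (hD : 1 ≤ D) :
    IsTraversal D D (parallelTraversal D) := by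
  obtain ⟨n, rfl⟩ : ∃ n, D = n + 1 := ⟨D - 1, by omega⟩
  refine ⟨?_, ?_, ?_⟩
  · simp [parallelTraversal, List.range_succ_eq_map]
  · simp [parallelTraversal, List.range_succ]
  · change List.IsChain _ _
    rw [parallelTraversal, List.isChain_map, List.isChain_range_succ]
    exact fun m _ => ⟨by omega, by omega, by omega, by omega, by simp⟩

lemma TravStep.eq_succ_succ_of_parity {p q : ℕ × ℕ} (h : TravStep p q)
    (hp : p.1 % 2 = p.2 % 2) (hq : q.1 % 2 = q.2 % 2) : q = (p.1 + 1, p.2 + 1) := by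
  obtain ⟨h₁, h₂, h₃, h₄, hne⟩ := h
  obtain ⟨c, d⟩ := p
  obtain ⟨c', d'⟩ := q
  simp only [Prod.mk.injEq, ne_eq, not_and] at *
  omega

lemma eq_map_range'_of_isChain_travStep (T : List (ℕ × ℕ)) (s : ℕ)
    (hT : List.IsChain TravStep ((s, s) :: T)) (hpar : ∀ p ∈ T, p.1 % 2 = p.2 % 2) :
    (s, s) :: T = (List.range' s (T.length + 1)).map fun i => (i, i) := by
  induction T generalizing s with
  | nil => simp
  | cons q T ih =>
    obtain ⟨hstep, hT⟩ := List.isChain_cons_cons.mp hT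
    obtain rfl : q = (s + 1, s + 1) :=
      hstep.eq_succ_succ_of_parity rfl (hpar q List.mem_cons_self)
    rw [List.length_cons, List.range'_succ, List.map_cons,
      ← ih (s + 1) hT fun p hp => hpar p (List.mem_cons_of_mem _ hp)]

lemma IsTraversal.exists_mod_two_ne {D : ℕ} (hD : 1 ≤ D) {T : List (ℕ × ℕ)}
    (hT : IsTraversal D D T) (hne : T ≠ parallelTraversal D) :
    ∃ ij ∈ T, ij.1 % 2 ≠ ij.2 % 2 := by
  by_contra! hpar
  apply hne
  obtain ⟨hhead, hlast, hchain⟩ := hT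
  obtain ⟨T, rfl⟩ : ∃ T', T = (0, 0) :: T' := by
    cases T with
    | nil => simp at hhead
    | cons p T => exact ⟨T, by simpa using hhead⟩
  have hdiag := eq_map_range'_of_isChain_travStep T 0 hchain
    fun p hp => hpar p (List.mem_cons_of_mem _ hp)
  have hlen : T.length = D - 1 := by
    simpa [hdiag, List.range'_concat] using hlast
  rw [hdiag, hlen, Nat.sub_add_cancel hD, ← List.range_eq_range', parallelTraversal]

end Traversal

section DiscreteFrechet

variable {E : Type*} [PseudoMetricSpace E] {m k : ℕ} {p q : ℕ → E}

lemma ddF_le_of_isTraversal {T : List (ℕ × ℕ)} {r : ℝ} (hT : IsTraversal m k T)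
    (hr : ∀ ij ∈ T, dist (p ij.1) (q ij.2) ≤ r) : ddF m k p q ≤ r := by
  refine csInf_le ⟨0, ?_⟩ ⟨T, hT, hr⟩
  rintro r' ⟨T', hT', hr'⟩
  obtain ⟨ij, hij⟩ := Option.isSome_iff_exists.mp (by simp [hT'.1] : T'.head?.isSome)
  exact dist_nonneg.trans (hr' ij (List.mem_of_mem_head? hij))

lemma le_ddF_of_forall_isTraversal {T₀ : List (ℕ × ℕ)} (hT₀ : IsTraversal m k T₀) {r : ℝ}
    (hr : ∀ T, IsTraversal m k T → ∃ ij ∈ T, r ≤ dist (p ij.1) (q ij.2)) :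
    r ≤ ddF m k p q := by
  obtain ⟨R, hR⟩ := (T₀.finite_toSet.image fun ij => dist (p ij.1) (q ij.2)).bddAbove
  refine le_csInf ⟨R, T₀, hT₀, fun ij hij => hR ⟨ij, hij, rfl⟩⟩ ?_
  rintro r' ⟨T, hT, hr'⟩
  obtain ⟨ij, hij, hle⟩ := hr T hT
  exact hle.trans (hr' ij hij)

end DiscreteFrechet

/-- equal binary vectors give discrete Fréchet distance at most 1, distinct
vectors give at least √2, and any non-parallel traversal incurs a distance of at least 2. -/
theorem vector_gadgets (D : ℕ) (hD : 1 ≤ D) (a b : ℕ → Bool) :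
    ((∀ j < D, a j = b j) → ddF D D (Aseq a) (Bseq b) ≤ 1) ∧
    ((∃ j < D, a j ≠ b j) → Real.sqrt 2 ≤ ddF D D (Aseq a) (Bseq b)) ∧
    (∀ T : List (ℕ × ℕ), IsTraversal D D T →
      T ≠ (List.range D).map (fun i => (i, i)) →
      ∃ ij ∈ T, 2 ≤ dist (Aseq a ij.1) (Bseq b ij.2)) := by
  have hparallel := isTraversal_parallelTraversal hD
  have nonparallel : ∀ T, IsTraversal D D T → T ≠ parallelTraversal D →
      ∃ ij ∈ T, 2 ≤ dist (Aseq a ij.1) (Bseq b ij.2) := by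
    intro T hT hne
    obtain ⟨ij, hij, hmod⟩ := hT.exists_mod_two_ne hD hne
    exact ⟨ij, hij, two_le_dist_Aseq_Bseq_of_parity_ne a b _ _ hmod⟩
  refine ⟨fun hab => ?_, fun ⟨j, hj, hne⟩ => ?_, nonparallel⟩
  · refine ddF_le_of_isTraversal hparallel fun ij hij => ?_
    obtain ⟨i, hi, rfl⟩ := mem_parallelTraversal.mp hij
    exact (dist_Aseq_Bseq_of_parity_eq_of_eq a b i i rfl (hab i hi)).le
  · refine le_ddF_of_forall_isTraversal hparallel fun T hT => ?_
    by_cases hT' : T = parallelTraversal D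
    · subst hT'
      exact ⟨(j, j), mem_parallelTraversal.mpr ⟨j, hj, rfl⟩,
        (dist_Aseq_Bseq_of_parity_eq_of_ne a b j j rfl hne).ge⟩
    · obtain ⟨ij, hij, h2⟩ := nonparallel T hT hT'
      have hsqrt2 : √2 ≤ 2 := by
        rw [Real.sqrt_le_left zero_le_two]; norm_num
      exact ⟨ij, hij, hsqrt2.trans h2⟩
end

section
/- Let $a \le b$ be reals, $w > 0$, and let $z$ be uniformly distributed on $[0, w]$. Then the probability that $\lfloor (a - z)/w \rfloor \ne \lfloor (b - z)/w \rfloor$ equals $\min((b-a)/w, 1)$. -/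
open Set

/-!
The set of shifts `z` for which the grid separates `a` and `b` is invariant under `z ↦ z + n w`,
so its measure is the same on every interval `(t, t + w]`, each being a fundamental domain of
`wℤ`. On `(a, a + w]` the point `a` always lies in cell `-1`, and `b` lies in another cell
exactly when `z ≤ b`; there the set is `(a, min b (a + w)]`, of length `min (b - a) w`.
-/

open MeasureTheory ProbabilityTheory

def separatingShifts (w a b : ℝ) : Set ℝ := {z | ⌊(a - z) / w⌋ ≠ ⌊(b - z) / w⌋}

section

variable {w : ℝ} (a b : ℝ)

theorem measurableSet_separatingShifts : MeasurableSet (separatingShifts w a b) :=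
  (measurableSet_eq_fun (by fun_prop) (by fun_prop)).compl

theorem zsmul_add_mem_separatingShifts_iff (hw : w ≠ 0) (n : ℤ) (z : ℝ) :
    n • w + z ∈ separatingShifts w a b ↔ z ∈ separatingShifts w a b := by
  have shift (x : ℝ) : (x - (n • w + z)) / w = (x - z) / w - n := by
    field_simp; rw [zsmul_eq_mul]; ring
  simp only [separatingShifts, mem_ofPred_eq, shift, Int.floor_sub_intCast, ne_eq, sub_left_inj]

theorem mem_separatingShifts_iff_le (hab : a ≤ b) (hw : 0 < w) {z : ℝ}
    (hz : z ∈ Ioc a (a + w)) : z ∈ separatingShifts w a b ↔ z ≤ b := by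
  have floor_a : ⌊(a - z) / w⌋ = -1 := by
    rw [Int.floor_eq_iff, Int.cast_neg, Int.cast_one, neg_add_cancel, le_div_iff₀ hw,
      div_lt_iff₀ hw]
    constructor <;> linarith [hz.1, hz.2]
  have floor_b : -1 ≤ ⌊(b - z) / w⌋ := floor_a ▸ Int.floor_le_floor (by gcongr)
  calc z ∈ separatingShifts w a b ↔ ⌊(b - z) / w⌋ ≠ -1 := by
        rw [separatingShifts, mem_ofPred_eq, floor_a, ne_comm]
    _ ↔ 0 ≤ ⌊(b - z) / w⌋ := by omega
    _ ↔ 0 ≤ (b - z) / w := Int.floor_nonneg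
    _ ↔ z ≤ b := by rw [le_div_iff₀ hw, zero_mul, sub_nonneg]

theorem separatingShifts_inter_Ioc (hab : a ≤ b) (hw : 0 < w) :
    separatingShifts w a b ∩ Ioc a (a + w) = Ioc a (min b (a + w)) := by
  ext z
  simp only [mem_inter_iff, mem_Ioc, le_min_iff]
  constructor
  · rintro ⟨hsep, hz⟩
    exact ⟨hz.1, (mem_separatingShifts_iff_le a b hab hw hz).1 hsep, hz.2⟩
  · rintro ⟨haz, hzb, hzw⟩
    exact ⟨(mem_separatingShifts_iff_le a b hab hw ⟨haz, hzw⟩).2 hzb, haz, hzw⟩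

theorem volume_separatingShifts_inter_Ioc (hab : a ≤ b) (hw : 0 < w) (t : ℝ) :
    volume (separatingShifts w a b ∩ Ioc t (t + w)) = ENNReal.ofReal (min (b - a) w) := by
  have periodic (g : AddSubgroup.zmultiples w) :
      (g +ᵥ ·) ⁻¹' separatingShifts w a b = separatingShifts w a b := by
    obtain ⟨_, n, rfl⟩ := g
    ext z
    exact zsmul_add_mem_separatingShifts_iff a b hw.ne' n z
  refine ((isAddFundamentalDomain_Ioc hw t).measure_set_eq (isAddFundamentalDomain_Ioc hw a)
    (measurableSet_separatingShifts a b) periodic).trans ?_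
  rw [separatingShifts_inter_Ioc a b hab hw, Real.volume_Ioc, ← min_sub_sub_right,
    add_sub_cancel_left]

end

open MeasureTheory ProbabilityTheory in
/-- a randomly shifted grid of width `w` separates `a ≤ b` with
probability exactly `min ((b-a)/w) 1`. -/
theorem grid_separation_prob_eq (a b w : ℝ) (hab : a ≤ b) (hw : 0 < w) :
    (volume[|Set.Icc (0:ℝ) w]) {z | ⌊(a - z) / w⌋ ≠ ⌊(b - z) / w⌋}
      = ENNReal.ofReal (min ((b - a) / w) 1) := by
  have hIcc : volume (Icc 0 w ∩ separatingShifts w a b) = ENNReal.ofReal (min (b - a) w) := by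
    rw [inter_comm, ← measure_congr ((ae_eq_refl _).inter Ioc_ae_eq_Icc)]
    simpa using volume_separatingShifts_inter_Ioc a b hab hw 0
  rw [cond_apply measurableSet_Icc]
  change _ * volume (_ ∩ separatingShifts w a b) = _
  rw [hIcc, Real.volume_Icc, sub_zero, ← div_self hw.ne', min_div_div_right hw.le,
    ENNReal.ofReal_div_of_pos hw, ENNReal.div_eq_inv_mul]
end
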